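/- arXiv:2301.01910 — 3 statements merged into one kernel-verified Lean document; each statement's English description precedes it below -/
import Mathlib

section
/- Let b > 0 and let (f_j)_{j≥1} be a sequence of functions f_j : ℝ → ℝ that are twice continuously differentiable on [0,b], and let C₁, C₂ ≥ 0 be constants with |f_j'(α)| ≤ C₁ and |f_j''(α)| ≤ C₂ for all j ≥ 1 and all α ∈ [0,b]. Assume that for every α ∈ [0,b] the limit λ(α) = lim_{m→∞} (1/m) Σ_{j=1}^m f_j(α) exists. Then the limit F = lim_{m→∞} (1/m) Σ_{j=1}^m f_j'(0) exists, |F| ≤ C₁, and λ has right derivative F at 0, i.e. lim_{α→0⁺} (λ(α) − λ(0))/α = F. -/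
/-!
By Taylor's formula the difference quotient of each `f j` at `0` differs from `f' j 0` by at most
`C2 * α`, uniformly in `j`; so the difference quotients of the Cesàro means of the `f j` converge,
as `α → 0⁺`, to the Cesàro means of the `f' j 0` uniformly in `m`. The Moore–Osgood interchange of
limits then shows that these means converge and that their limit is the right derivative of `lam`
at `0`.
-/

open Filter Topology Set

section MooreOsgood

variable {ι α β : Type*} [UniformSpace β] {F : ι → α → β} {f : α → β} {L : ι → β}
  {p : Filter ι} {p' : Filter α}

theorem TendstoUniformlyOnFilter.cauchy_map_of_eventually_tendsto [NeBot p] [NeBot p']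
    (h1 : TendstoUniformlyOnFilter F f p p') (h2 : ∀ᶠ i in p, Tendsto (F i) p' (𝓝 (L i))) :
    Cauchy (map L p) := by
  refine cauchy_map_iff.2 ⟨inferInstance, fun u hu => ?_⟩
  obtain ⟨t, ht, htu⟩ := comp3_mem_uniformity hu
  have hFF : ∀ᶠ ij in p ×ˢ p, ∀ᶠ x in p', (F ij.1 x, F ij.2 x) ∈ t :=
    (h1.uniformCauchySeqOnFilter t ht).curry
  have hLF : ∀ᶠ i in p, ∀ᶠ x in p', (L i, F i x) ∈ t := by
    filter_upwards [h2] with i hi using Uniform.tendsto_nhds_right.1 hi ht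
  have hFL : ∀ᶠ i in p, ∀ᶠ x in p', (F i x, L i) ∈ t := by
    filter_upwards [h2] with i hi using Uniform.tendsto_nhds_left.1 hi ht
  rw [mem_map]
  filter_upwards [hFF, hLF.prod_inl p, hFL.prod_inr p] with ⟨i, j⟩ hij hi hj
  obtain ⟨x, hx, hix, hjx⟩ := (hij.and (hi.and hj)).exists
  exact htu ⟨F i x, hix, F j x, hx, hjx⟩

theorem TendstoUniformlyOnFilter.exists_tendsto_of_eventually_tendsto [CompleteSpace β]
    [NeBot p] [NeBot p'] (h1 : TendstoUniformlyOnFilter F f p p')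
    (h2 : ∀ᶠ i in p, Tendsto (F i) p' (𝓝 (L i))) :
    ∃ ℓ, Tendsto L p (𝓝 ℓ) ∧ Tendsto f p' (𝓝 ℓ) := by
  obtain ⟨ℓ, hℓ⟩ := CompleteSpace.complete (h1.cauchy_map_of_eventually_tendsto h2)
  exact ⟨ℓ, hℓ, h1.tendsto_of_eventually_tendsto h2 hℓ⟩

end MooreOsgood

theorem Metric.tendstoUniformlyOnFilter_of_dist_le {ι α β : Type*} [PseudoMetricSpace β]
    {F : ι → α → β} {f : α → β} {p : Filter ι} {p' : Filter α} {δ : ι → ℝ}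
    (hδ : Tendsto δ p (𝓝 0)) (h : ∀ᶠ n : ι × α in p ×ˢ p', dist (f n.2) (F n.1 n.2) ≤ δ n.1) :
    TendstoUniformlyOnFilter F f p p' := by
  refine Metric.tendstoUniformlyOnFilter_iff.2 fun ε hε => ?_
  filter_upwards [h, (hδ.eventually (gt_mem_nhds hε)).prod_inl p'] with n hn hδn
  exact hn.trans_lt hδn

theorem abs_sub_sub_deriv_mul_le {f f' f'' : ℝ → ℝ} {s : Set ℝ} {C x y : ℝ} (hs : Convex ℝ s)
    (hf : ∀ t ∈ s, HasDerivWithinAt f (f' t) s t) (hf' : ∀ t ∈ s, HasDerivWithinAt f' (f'' t) s t)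
    (hf'' : ∀ t ∈ s, |f'' t| ≤ C) (hx : x ∈ s) (hy : y ∈ s) :
    |f y - f x - f' x * (y - x)| ≤ C * (y - x) ^ 2 := by
  have hC : 0 ≤ C := (abs_nonneg _).trans (hf'' x hx)
  have hxy : uIcc x y ⊆ s := (convex_iff_ordConnected.1 hs).uIcc_subset hx hy
  have hf'_lip : ∀ t ∈ s, |f' t - f' x| ≤ C * |t - x| := fun t ht =>
    hs.norm_image_sub_le_of_norm_hasDerivWithin_le hf' hf'' hx ht
  have hg : ∀ t ∈ uIcc x y,
      HasDerivWithinAt (fun t => f t - f' x * t) (f' t - f' x) (uIcc x y) t := fun t ht =>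
    ((hf t (hxy ht)).mono hxy).sub (((hasDerivWithinAt_id t _).const_mul (f' x)).congr_deriv
      (mul_one _))
  have hg_bound : ∀ t ∈ uIcc x y, ‖f' t - f' x‖ ≤ C * |y - x| := fun t ht =>
    (hf'_lip t (hxy ht)).trans (mul_le_mul_of_nonneg_left (abs_sub_left_of_mem_uIcc ht) hC)
  calc |f y - f x - f' x * (y - x)| = ‖(f y - f' x * y) - (f x - f' x * x)‖ := by
        rw [Real.norm_eq_abs]; ring_nf
    _ ≤ C * |y - x| * ‖y - x‖ := (convex_uIcc x y).norm_image_sub_le_of_norm_hasDerivWithin_le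
        hg hg_bound left_mem_uIcc right_mem_uIcc
    _ = C * (y - x) ^ 2 := by rw [Real.norm_eq_abs, mul_assoc, abs_mul_abs_self, sq]

noncomputable def cesaroMean (u : ℕ → ℝ) (m : ℕ) : ℝ := 1 / m * ∑ j ∈ Finset.Icc 1 m, u j

theorem cesaroMean_sub (u v : ℕ → ℝ) (m : ℕ) :
    cesaroMean (fun j => u j - v j) m = cesaroMean u m - cesaroMean v m := by
  simp only [cesaroMean, Finset.sum_sub_distrib, mul_sub]

theorem cesaroMean_div_const (u : ℕ → ℝ) (c : ℝ) (m : ℕ) :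
    cesaroMean (fun j => u j / c) m = cesaroMean u m / c := by
  simp only [cesaroMean, ← Finset.sum_div, mul_div_assoc]

theorem abs_cesaroMean_le {u : ℕ → ℝ} {C : ℝ} {m : ℕ} (hm : m ≠ 0)
    (hu : ∀ j ∈ Finset.Icc 1 m, |u j| ≤ C) : |cesaroMean u m| ≤ C := by
  have hm' : (0 : ℝ) < m := Nat.cast_pos.2 (Nat.pos_of_ne_zero hm)
  rw [cesaroMean, abs_mul, abs_of_pos (one_div_pos.2 hm'), one_div, inv_mul_le_iff₀ hm']
  calc |∑ j ∈ Finset.Icc 1 m, u j| ≤ ∑ j ∈ Finset.Icc 1 m, |u j| := Finset.abs_sum_le_sum_abs _ _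
    _ ≤ (Finset.Icc 1 m).card • C := Finset.sum_le_card_nsmul _ _ _ hu
    _ = m * C := by simp

theorem abs_cesaroMean_slope_sub_le {f f' f'' : ℕ → ℝ → ℝ} {s : Set ℝ} {C x y : ℝ}
    (hs : Convex ℝ s) (hf : ∀ j, 1 ≤ j → ∀ t ∈ s, HasDerivWithinAt (f j) (f' j t) s t)
    (hf' : ∀ j, 1 ≤ j → ∀ t ∈ s, HasDerivWithinAt (f' j) (f'' j t) s t)
    (hf'' : ∀ j, 1 ≤ j → ∀ t ∈ s, |f'' j t| ≤ C) (hx : x ∈ s) (hy : y ∈ s) (hxy : x ≠ y)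
    {m : ℕ} (hm : m ≠ 0) :
    |(cesaroMean (f · y) m - cesaroMean (f · x) m) / (y - x) - cesaroMean (f' · x) m|
      ≤ C * |y - x| := by
  rw [← cesaroMean_sub, ← cesaroMean_div_const, ← cesaroMean_sub]
  refine abs_cesaroMean_le hm fun j hj => ?_
  have hj1 := (Finset.mem_Icc.1 hj).1
  have hyx : 0 < |y - x| := abs_pos.2 (sub_ne_zero.2 hxy.symm)
  rw [div_sub' (sub_ne_zero.2 hxy.symm), abs_div, div_le_iff₀ hyx, mul_comm (y - x)]
  calc |f j y - f j x - f' j x * (y - x)| ≤ C * (y - x) ^ 2 :=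
        abs_sub_sub_deriv_mul_le hs (hf j hj1) (hf' j hj1) (hf'' j hj1) hx hy
    _ = C * |y - x| * |y - x| := by rw [mul_assoc, abs_mul_abs_self, sq]

theorem stmt_3_general (b : ℝ) (hb : 0 < b) (f f' f'' : ℕ → ℝ → ℝ) (C1 C2 : ℝ)
    (hderiv1 : ∀ j : ℕ, 1 ≤ j → ∀ α ∈ Set.Icc (0:ℝ) b,
      HasDerivWithinAt (f j) (f' j α) (Set.Icc 0 b) α)
    (hderiv2 : ∀ j : ℕ, 1 ≤ j → ∀ α ∈ Set.Icc (0:ℝ) b,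
      HasDerivWithinAt (f' j) (f'' j α) (Set.Icc 0 b) α)
    (hbd1 : ∀ j : ℕ, 1 ≤ j → ∀ α ∈ Set.Icc (0:ℝ) b, |f' j α| ≤ C1)
    (hbd2 : ∀ j : ℕ, 1 ≤ j → ∀ α ∈ Set.Icc (0:ℝ) b, |f'' j α| ≤ C2)
    (lam : ℝ → ℝ)
    (hlam : ∀ α ∈ Set.Icc (0:ℝ) b,
      Tendsto (fun m : ℕ => (1 / (m:ℝ)) * ∑ j ∈ Finset.Icc 1 m, f j α)
        atTop (nhds (lam α))) :
    ∃ F : ℝ,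
      Tendsto (fun m : ℕ => (1 / (m:ℝ)) * ∑ j ∈ Finset.Icc 1 m, f' j 0)
          atTop (nhds F) ∧
      |F| ≤ C1 ∧
      Tendsto (fun α : ℝ => (lam α - lam 0) / α)
        (nhdsWithin 0 (Set.Ioi 0)) (nhds F) := by
  have h0 : (0 : ℝ) ∈ Icc 0 b := left_mem_Icc.2 hb.le
  have hslope : TendstoUniformlyOnFilter
      (fun α m => (cesaroMean (f · α) m - cesaroMean (f · 0) m) / α) (cesaroMean (f' · 0))
      (𝓝[>] 0) atTop := by
    refine Metric.tendstoUniformlyOnFilter_of_dist_le (δ := fun α => C2 * α) ?_ ?_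
    · simpa using (tendsto_id.const_mul C2).mono_left (nhdsWithin_le_nhds (a := (0 : ℝ)))
    · filter_upwards [Eventually.prod_mk (Ioc_mem_nhdsGT hb) (eventually_ne_atTop 0)]
        with ⟨α, m⟩ ⟨hα, hm⟩
      rw [dist_comm, Real.dist_eq]
      simpa [abs_of_pos hα.1] using abs_cesaroMean_slope_sub_le (convex_Icc 0 b) hderiv1 hderiv2
        hbd2 h0 (Ioc_subset_Icc_self hα) hα.1.ne hm
  have hquot : ∀ᶠ α in 𝓝[>] 0, Tendsto
      (fun m => (cesaroMean (f · α) m - cesaroMean (f · 0) m) / α) atTop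
      (𝓝 ((lam α - lam 0) / α)) := by
    filter_upwards [Ioc_mem_nhdsGT hb] with α hα
    exact ((hlam α (Ioc_subset_Icc_self hα)).sub (hlam 0 h0)).div_const α
  obtain ⟨F, hlamF, hmeanF⟩ := hslope.exists_tendsto_of_eventually_tendsto hquot
  refine ⟨F, hmeanF, le_of_tendsto hmeanF.abs ?_, hlamF⟩
  filter_upwards [eventually_ne_atTop 0] with m hm
  exact abs_cesaroMean_le hm fun j hj => hbd1 j (Finset.mem_Icc.1 hj).1 0 h0

theorem stmt_3 (b : ℝ) (hb : 0 < b) (f f' f'' : ℕ → ℝ → ℝ) (C1 C2 : ℝ)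
    (hC1 : 0 ≤ C1) (hC2 : 0 ≤ C2)
    (hderiv1 : ∀ j : ℕ, 1 ≤ j → ∀ α ∈ Set.Icc (0:ℝ) b,
      HasDerivWithinAt (f j) (f' j α) (Set.Icc 0 b) α)
    (hderiv2 : ∀ j : ℕ, 1 ≤ j → ∀ α ∈ Set.Icc (0:ℝ) b,
      HasDerivWithinAt (f' j) (f'' j α) (Set.Icc 0 b) α)
    (hcont : ∀ j : ℕ, 1 ≤ j → ContinuousOn (f'' j) (Set.Icc 0 b))
    (hbd1 : ∀ j : ℕ, 1 ≤ j → ∀ α ∈ Set.Icc (0:ℝ) b, |f' j α| ≤ C1)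
    (hbd2 : ∀ j : ℕ, 1 ≤ j → ∀ α ∈ Set.Icc (0:ℝ) b, |f'' j α| ≤ C2)
    (lam : ℝ → ℝ)
    (hlam : ∀ α ∈ Set.Icc (0:ℝ) b,
      Tendsto (fun m : ℕ => (1 / (m:ℝ)) * ∑ j ∈ Finset.Icc 1 m, f j α)
        atTop (nhds (lam α))) :
    ∃ F : ℝ,
      Tendsto (fun m : ℕ => (1 / (m:ℝ)) * ∑ j ∈ Finset.Icc 1 m, f' j 0)
          atTop (nhds F) ∧
      |F| ≤ C1 ∧
      Tendsto (fun α : ℝ => (lam α - lam 0) / α)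
        (nhdsWithin 0 (Set.Ioi 0)) (nhds F) :=
  stmt_3_general b hb f f' f'' C1 C2 hderiv1 hderiv2 hbd1 hbd2 lam hlam
end

section
/- Let m ≥ 1, let 0 < d_min ≤ d_max, 0 < k_min ≤ k_max, and C_d⁽¹⁾, C_d⁽²⁾, C_k⁽¹⁾, C_g⁽²⁾ ≥ 0. For j = 0, …, m let d_j, g_j, k_j : ℝ → ℝ be twice continuously differentiable functions satisfying, for all α: k_{j+1}(α) = k_j(α)/(1 + d_j(α) k_j(α)) + g_{j+1}(α) for 0 ≤ j ≤ m−1; k_m(α) = k_0(α); d_min ≤ d_j(α) ≤ d_max; k_min ≤ k_j(α) ≤ k_max; |d_j'(α)| ≤ C_d⁽¹⁾; |d_j''(α)| ≤ C_d⁽²⁾; |k_j'(α)| ≤ C_k⁽¹⁾; and |g_j''(α)| ≤ C_g⁽²⁾. Set β_max = 1/(1 + d_min k_min)² and η_max = [k_max²·(C_d⁽²⁾ + C_d⁽²⁾ d_max k_max + 2(C_d⁽¹⁾)² k_max) + 2C_k⁽¹⁾·(C_k⁽¹⁾ d_max + 2C_d⁽¹⁾ k_max)]/(1 + d_min k_min)³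 + C_g⁽²⁾. Then |k_j''(α)| ≤ η_max/(1 − β_max) for all 0 ≤ j ≤ m and all α. -/
/-!
Differentiating `k_{j+1} = k_j / (1 + d_j k_j) + g_{j+1}` twice gives
`k̈_{j+1} = k̈_j / (1 + d_j k_j)² + η_j`, where the a priori bounds control `|η_j| ≤ η_max`;
hence `|k̈_{j+1}| ≤ β_max |k̈_j| + η_max`. The excess of `|k̈_j|` over the fixed point
`M = η_max / (1 - β_max)` of `y ↦ β_max y + η_max` then decays like `β_max ^ j`, and periodicity
`k_m = k_0` forces the excess at `j = 0`, hence at every `j`, to be nonpositive.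
-/

open Set

theorem hasDerivAt_div_one_add_mul {p q : ℝ → ℝ} {p' q' x : ℝ}
    (hp : HasDerivAt p p' x) (hq : HasDerivAt q q' x) (hu : 1 + q x * p x ≠ 0) :
    HasDerivAt (fun y => p y / (1 + q y * p y)) ((p' - q' * p x ^ 2) / (1 + q x * p x) ^ 2) x :=
  (hp.fun_div ((hq.fun_mul hp).const_add 1) hu).congr_deriv (by ring)

theorem deriv_deriv_div_one_add_mul_add {p q r : ℝ → ℝ} {x : ℝ}
    (hp : Differentiable ℝ p) (hq : Differentiable ℝ q) (hr : Differentiable ℝ r)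
    (hp' : DifferentiableAt ℝ (deriv p) x) (hq' : DifferentiableAt ℝ (deriv q) x)
    (hr' : DifferentiableAt ℝ (deriv r) x) (hu : ∀ y, 1 + q y * p y ≠ 0) :
    deriv (deriv fun y => p y / (1 + q y * p y) + r y) x =
      deriv (deriv p) x / (1 + q x * p x) ^ 2
        + (2 * p x ^ 3 * deriv q x ^ 2 - 2 * q x * deriv p x ^ 2
            - 4 * p x * deriv p x * deriv q x
            - p x ^ 2 * deriv (deriv q) x * (1 + q x * p x)) / (1 + q x * p x) ^ 3
        + deriv (deriv r) x := by
  have hderiv : deriv (fun y => p y / (1 + q y * p y) + r y) = fun y =>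
      (deriv p y - deriv q y * p y ^ 2) / (1 + q y * p y) ^ 2 + deriv r y := by
    funext y
    exact ((hasDerivAt_div_one_add_mul (hp y).hasDerivAt (hq y).hasDerivAt (hu y)).add
      (hr y).hasDerivAt).deriv
  have hnum := hp'.hasDerivAt.fun_sub (hq'.hasDerivAt.fun_mul ((hp x).hasDerivAt.fun_pow 2))
  have hden := (((hq x).hasDerivAt.fun_mul (hp x).hasDerivAt).const_add 1).fun_pow 2
  rw [hderiv, ((hnum.fun_div hden (pow_ne_zero 2 (hu x))).fun_add hr'.hasDerivAt).deriv]
  have := hu x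
  simp only [Nat.cast_ofNat, Nat.add_one_sub_one, pow_one]
  field_simp
  ring

noncomputable def etaMax (dmin dmax kmin kmax Cd1 Cd2 Ck1 Cg2 : ℝ) : ℝ :=
  (kmax ^ 2 * (Cd2 + Cd2 * dmax * kmax + 2 * Cd1 ^ 2 * kmax)
      + 2 * Ck1 * (Ck1 * dmax + 2 * Cd1 * kmax)) / (1 + dmin * kmin) ^ 3 + Cg2

section Bounds

variable {dmin dmax kmin kmax Cd1 Cd2 Ck1 Cg2 : ℝ}

section Pointwise

variable {a b P Q A B R : ℝ}

theorem abs_curvature_numerator_le (ha : a ∈ Icc kmin kmax) (hb : b ∈ Icc dmin dmax)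
    (hkmin : 0 ≤ kmin) (hdmin : 0 ≤ dmin) (hP : |P| ≤ Ck1) (hQ : |Q| ≤ Cd1) (hB : |B| ≤ Cd2) :
    |2 * a ^ 3 * Q ^ 2 - 2 * b * P ^ 2 - 4 * a * P * Q - a ^ 2 * B * (1 + b * a)|
      ≤ kmax ^ 2 * (Cd2 + Cd2 * dmax * kmax + 2 * Cd1 ^ 2 * kmax)
          + 2 * Ck1 * (Ck1 * dmax + 2 * Cd1 * kmax) := by
  obtain ⟨ha₀, ha₁⟩ := ha
  obtain ⟨hb₀, hb₁⟩ := hb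
  have ha : 0 ≤ a := hkmin.trans ha₀
  have hb : 0 ≤ b := hdmin.trans hb₀
  have hkmax : 0 ≤ kmax := ha.trans ha₁
  have hdmax : 0 ≤ dmax := hb.trans hb₁
  have hCk1 : 0 ≤ Ck1 := (abs_nonneg P).trans hP
  have hCd2 : 0 ≤ Cd2 := (abs_nonneg B).trans hB
  calc _ ≤ |2 * a ^ 3 * Q ^ 2| + |2 * b * P ^ 2| + |4 * a * P * Q| + |a ^ 2 * B * (1 + b * a)| :=
        (abs_sub _ _).trans (add_le_add_left ((abs_sub _ _).trans
          (add_le_add_left (abs_sub _ _) _)) _)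
    _ = 2 * a ^ 3 * |Q| ^ 2 + 2 * b * |P| ^ 2 + 4 * a * |P| * |Q| + a ^ 2 * |B| * (1 + b * a) := by
        simp only [abs_mul, abs_pow, abs_two, abs_of_nonneg ha, abs_of_nonneg hb,
          abs_of_nonneg (by norm_num : (0 : ℝ) ≤ 4),
          abs_of_nonneg (by positivity : (0 : ℝ) ≤ 1 + b * a)]
    _ ≤ 2 * kmax ^ 3 * Cd1 ^ 2 + 2 * dmax * Ck1 ^ 2 + 4 * kmax * Ck1 * Cd1
          + kmax ^ 2 * Cd2 * (1 + dmax * kmax) := by gcongr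
    _ = _ := by ring

theorem abs_curvature_second_deriv_le (ha : a ∈ Icc kmin kmax) (hb : b ∈ Icc dmin dmax)
    (hkmin : 0 ≤ kmin) (hdmin : 0 ≤ dmin) (hP : |P| ≤ Ck1) (hQ : |Q| ≤ Cd1) (hB : |B| ≤ Cd2)
    (hR : |R| ≤ Cg2) :
    |A / (1 + b * a) ^ 2
        + (2 * a ^ 3 * Q ^ 2 - 2 * b * P ^ 2 - 4 * a * P * Q - a ^ 2 * B * (1 + b * a))
          / (1 + b * a) ^ 3 + R|
      ≤ 1 / (1 + dmin * kmin) ^ 2 * |A| + etaMax dmin dmax kmin kmax Cd1 Cd2 Ck1 Cg2 := by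
  have hu : 1 + dmin * kmin ≤ 1 + b * a := by
    have := mul_le_mul hb.1 ha.1 hkmin (hdmin.trans hb.1)
    linarith
  have hu₀ : 0 < 1 + dmin * kmin := by positivity
  have hba : 0 < 1 + b * a := hu₀.trans_le hu
  have hnum := abs_curvature_numerator_le ha hb hkmin hdmin hP hQ hB
  calc _ ≤ |A| / (1 + b * a) ^ 2
          + |2 * a ^ 3 * Q ^ 2 - 2 * b * P ^ 2 - 4 * a * P * Q - a ^ 2 * B * (1 + b * a)|
            / (1 + b * a) ^ 3 + |R| := by
        refine (abs_add_three _ _ _).trans_eq ?_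
        rw [abs_div, abs_div, abs_of_pos (pow_pos hba 2), abs_of_pos (pow_pos hba 3)]
    _ ≤ |A| / (1 + dmin * kmin) ^ 2
          + (kmax ^ 2 * (Cd2 + Cd2 * dmax * kmax + 2 * Cd1 ^ 2 * kmax)
            + 2 * Ck1 * (Ck1 * dmax + 2 * Cd1 * kmax)) / (1 + dmin * kmin) ^ 3 + Cg2 := by
        gcongr
        exact (abs_nonneg _).trans hnum
    _ = _ := by rw [etaMax]; ring

end Pointwise

theorem abs_deriv_deriv_div_one_add_mul_add_le {p q r : ℝ → ℝ} {x : ℝ}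
    (hp : ContDiff ℝ 2 p) (hq : ContDiff ℝ 2 q) (hr : ContDiff ℝ 2 r)
    (hpbd : ∀ y, p y ∈ Icc kmin kmax) (hqbd : ∀ y, q y ∈ Icc dmin dmax)
    (hkmin : 0 ≤ kmin) (hdmin : 0 ≤ dmin) (hp₁ : |deriv p x| ≤ Ck1)
    (hq₁ : |deriv q x| ≤ Cd1) (hq₂ : |deriv (deriv q) x| ≤ Cd2) (hr₂ : |deriv (deriv r) x| ≤ Cg2) :
    |deriv (deriv fun y => p y / (1 + q y * p y) + r y) x|
      ≤ 1 / (1 + dmin * kmin) ^ 2 * |deriv (deriv p) x|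
        + etaMax dmin dmax kmin kmax Cd1 Cd2 Ck1 Cg2 := by
  have hu : ∀ y, 1 + q y * p y ≠ 0 := fun y =>
    (add_pos_of_pos_of_nonneg one_pos
      (mul_nonneg (hdmin.trans (hqbd y).1) (hkmin.trans (hpbd y).1))).ne'
  rw [deriv_deriv_div_one_add_mul_add (hp.differentiable two_ne_zero)
    (hq.differentiable two_ne_zero) (hr.differentiable two_ne_zero)
    (hp.differentiable_deriv_two x) (hq.differentiable_deriv_two x)
    (hr.differentiable_deriv_two x) hu]
  exact abs_curvature_second_deriv_le (hpbd x) (hqbd x) hkmin hdmin hp₁ hq₁ hq₂ hr₂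

end Bounds

theorem le_div_one_sub_of_le_mul_add_of_periodic {x : ℕ → ℝ} {β E : ℝ} {m : ℕ}
    (hβ₀ : 0 ≤ β) (hβ₁ : β < 1) (hm : m ≠ 0) (hstep : ∀ j < m, x (j + 1) ≤ β * x j + E)
    (hper : x m = x 0) : ∀ j ≤ m, x j ≤ E / (1 - β) := by
  set M := E / (1 - β)
  have hE : E = (1 - β) * M := (mul_div_cancel₀ E (sub_ne_zero.mpr hβ₁.ne')).symm
  have hdecay : ∀ j ≤ m, x j - M ≤ β ^ j * (x 0 - M) := by
    intro j
    induction j with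
    | zero => simp
    | succ j ih =>
      intro hj
      have := mul_le_mul_of_nonneg_left (ih (by omega)) hβ₀
      have := hstep j hj
      rw [pow_succ]
      linarith
  have h₀ : x 0 - M ≤ 0 := by
    have h := hdecay m le_rfl
    have : β ^ m < 1 := pow_lt_one₀ hβ₀ hβ₁ hm
    rw [hper] at h
    nlinarith
  intro j hj
  have := mul_nonpos_of_nonneg_of_nonpos (pow_nonneg hβ₀ j) h₀
  linarith [hdecay j hj]

theorem stmt_11_general (m : ℕ) (hm : 1 ≤ m)
    (dmin dmax kmin kmax Cd1 Cd2 Ck1 Cg2 : ℝ)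
    (hdmin : 0 < dmin) (hkmin : 0 < kmin)
    (d g k : ℕ → ℝ → ℝ)
    (hsd : ∀ j ≤ m, ContDiff ℝ 2 (d j))
    (hsg : ∀ j ≤ m, ContDiff ℝ 2 (g j))
    (hsk : ∀ j ≤ m, ContDiff ℝ 2 (k j))
    (hrec : ∀ j < m, ∀ α : ℝ, k (j + 1) α = k j α / (1 + d j α * k j α) + g (j + 1) α)
    (hper : ∀ α : ℝ, k m α = k 0 α)
    (hdbd : ∀ j ≤ m, ∀ α : ℝ, d j α ∈ Set.Icc dmin dmax)
    (hkbd : ∀ j ≤ m, ∀ α : ℝ, k j α ∈ Set.Icc kmin kmax)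
    (hd1 : ∀ j ≤ m, ∀ α : ℝ, |deriv (d j) α| ≤ Cd1)
    (hd2 : ∀ j ≤ m, ∀ α : ℝ, |deriv (deriv (d j)) α| ≤ Cd2)
    (hk1 : ∀ j ≤ m, ∀ α : ℝ, |deriv (k j) α| ≤ Ck1)
    (hg2 : ∀ j ≤ m, ∀ α : ℝ, |deriv (deriv (g j)) α| ≤ Cg2) :
    ∀ j ≤ m, ∀ α : ℝ,
      |deriv (deriv (k j)) α| ≤
        ((kmax ^ 2 * (Cd2 + Cd2 * dmax * kmax + 2 * Cd1 ^ 2 * kmax)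
            + 2 * Ck1 * (Ck1 * dmax + 2 * Cd1 * kmax)) / (1 + dmin * kmin) ^ 3
          + Cg2)
        / (1 - 1 / (1 + dmin * kmin) ^ 2) := by
  intro j hj α
  have hc : 0 < dmin * kmin := mul_pos hdmin hkmin
  refine le_div_one_sub_of_le_mul_add_of_periodic (x := fun j => |deriv (deriv (k j)) α|)
    (by positivity) ?_ (by omega) (fun i hi => ?_) (by simp only [funext hper]) j hj
  · rw [div_lt_one (by positivity)]
    nlinarith
  · rw [show k (i + 1) = _ from funext (hrec i hi)]
    exact abs_deriv_deriv_div_one_add_mul_add_le (hsk i hi.le) (hsd i hi.le) (hsg (i + 1) hi)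
      (hkbd i hi.le) (hdbd i hi.le) hkmin.le hdmin.le (hk1 i hi.le α) (hd1 i hi.le α)
      (hd2 i hi.le α) (hg2 (i + 1) hi α)

theorem stmt_11 (m : ℕ) (hm : 1 ≤ m)
    (dmin dmax kmin kmax Cd1 Cd2 Ck1 Cg2 : ℝ)
    (hdmin : 0 < dmin) (hdd : dmin ≤ dmax) (hkmin : 0 < kmin) (hkk : kmin ≤ kmax)
    (hCd1 : 0 ≤ Cd1) (hCd2 : 0 ≤ Cd2) (hCk1 : 0 ≤ Ck1) (hCg2 : 0 ≤ Cg2)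
    (d g k : ℕ → ℝ → ℝ)
    (hsd : ∀ j ≤ m, ContDiff ℝ 2 (d j))
    (hsg : ∀ j ≤ m, ContDiff ℝ 2 (g j))
    (hsk : ∀ j ≤ m, ContDiff ℝ 2 (k j))
    (hrec : ∀ j < m, ∀ α : ℝ, k (j + 1) α = k j α / (1 + d j α * k j α) + g (j + 1) α)
    (hper : ∀ α : ℝ, k m α = k 0 α)
    (hdbd : ∀ j ≤ m, ∀ α : ℝ, d j α ∈ Set.Icc dmin dmax)
    (hkbd : ∀ j ≤ m, ∀ α : ℝ, k j α ∈ Set.Icc kmin kmax)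
    (hd1 : ∀ j ≤ m, ∀ α : ℝ, |deriv (d j) α| ≤ Cd1)
    (hd2 : ∀ j ≤ m, ∀ α : ℝ, |deriv (deriv (d j)) α| ≤ Cd2)
    (hk1 : ∀ j ≤ m, ∀ α : ℝ, |deriv (k j) α| ≤ Ck1)
    (hg2 : ∀ j ≤ m, ∀ α : ℝ, |deriv (deriv (g j)) α| ≤ Cg2) :
    ∀ j ≤ m, ∀ α : ℝ,
      |deriv (deriv (k j)) α| ≤
        ((kmax ^ 2 * (Cd2 + Cd2 * dmax * kmax + 2 * Cd1 ^ 2 * kmax)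
            + 2 * Ck1 * (Ck1 * dmax + 2 * Cd1 * kmax)) / (1 + dmin * kmin) ^ 3
          + Cg2)
        / (1 - 1 / (1 + dmin * kmin) ^ 2) :=
  stmt_11_general m hm dmin dmax kmin kmax Cd1 Cd2 Ck1 Cg2 hdmin hkmin d g k hsd hsg hsk hrec hper
    hdbd hkbd hd1 hd2 hk1 hg2
end

section
/- Let d_min > 0, C ≥ 0 and c₀ > 0. Let a, b : ℝ → ℝ² be C¹ curves with ‖a(α)‖ ≥ d_min, ‖b(α)‖ ≥ d_min, ‖a'(α)‖ ≤ C and ‖b'(α)‖ ≤ C for all α. Define x(α) = ⟨a(α), b(α)⟩/(‖a(α)‖·‖b(α)‖) and c(α) = √((x(α) + 1)/2), and assume c(α) ≥ c₀ for all α. Then c is continuously differentiable and |c'(α)| ≤ C/(d_min·c₀) for all α. -/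
/-!
With `u = a / ‖a‖` and `v = b / ‖b‖` we have `x = ⟪a, b⟫ / (‖a‖ ‖b‖) = ⟪u, v⟫`. The derivative
of `u` is `‖a‖⁻¹` times the component of `a'` orthogonal to `u`, so `‖u'‖ ≤ ‖a'‖ / ‖a‖ ≤ C / dmin`,
and likewise for `v`; hence `|x'| ≤ ‖u'‖ + ‖v'‖ ≤ 2 C / dmin`. Finally `c = √((x + 1) / 2)` has
`c' = x' / (4 c)` and `c ≥ c₀`.
-/

open scoped RealInnerProductSpace

variable {E : Type*} [NormedAddCommGroup E] [InnerProductSpace ℝ E]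

theorem norm_sub_inner_smul_le {u : E} (hu : ‖u‖ = 1) (w : E) : ‖w - ⟪u, w⟫ • u‖ ≤ ‖w‖ := by
  have hsq : ‖w - ⟪u, w⟫ • u‖ ^ 2 = ‖w‖ ^ 2 - ⟪u, w⟫ ^ 2 := by
    rw [norm_sub_sq_real, real_inner_smul_right, norm_smul, hu, real_inner_comm u w,
      Real.norm_eq_abs, mul_one, sq_abs]
    ring
  refine (pow_le_pow_iff_left₀ (norm_nonneg _) (norm_nonneg _) two_ne_zero).mp ?_
  rw [hsq]
  nlinarith [sq_nonneg ⟪u, w⟫]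

theorem real_inner_normalize_normalize (x y : E) :
    ⟪NormedSpace.normalize x, NormedSpace.normalize y⟫ = ⟪x, y⟫ / (‖x‖ * ‖y‖) := by
  rw [NormedSpace.normalize, NormedSpace.normalize, real_inner_smul_left, real_inner_smul_right]
  field_simp

theorem HasDerivAt.norm {a : ℝ → E} {a' : E} {t : ℝ} (ha : HasDerivAt a a' t) (h0 : a t ≠ 0) :
    HasDerivAt (‖a ·‖) (⟪a t, a'⟫ / ‖a t‖) t := by
  have hpos : 0 < ‖a t‖ := norm_pos_iff.mpr h0
  have := ha.norm_sq.sqrt (by positivity)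
  simp only [Real.sqrt_sq (norm_nonneg _)] at this
  convert this using 1
  field_simp

theorem HasDerivAt.normalize {a : ℝ → E} {a' : E} {t : ℝ} (ha : HasDerivAt a a' t) (h0 : a t ≠ 0) :
    HasDerivAt (fun s => NormedSpace.normalize (a s))
      (‖a t‖⁻¹ • (a' - ⟪NormedSpace.normalize (a t), a'⟫ • NormedSpace.normalize (a t))) t := by
  have hpos : 0 < ‖a t‖ := norm_pos_iff.mpr h0
  have hinv : HasDerivAt (fun s => ‖a s‖⁻¹) (-(⟪a t, a'⟫ / ‖a t‖) / ‖a t‖ ^ 2) t :=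
    (ha.norm h0).inv hpos.ne'
  convert hinv.smul ha using 1
  · rfl
  · simp only [NormedSpace.normalize, real_inner_smul_left, smul_sub, smul_smul]
    field_simp
    module

theorem HasDerivAt.exists_inner_div_norm_mul_norm {a b : ℝ → E} {a' b' : E} {t : ℝ}
    (ha : HasDerivAt a a' t) (hb : HasDerivAt b b' t) (ha0 : a t ≠ 0) (hb0 : b t ≠ 0) :
    ∃ x', HasDerivAt (fun s => ⟪a s, b s⟫ / (‖a s‖ * ‖b s‖)) x' t ∧
      |x'| ≤ ‖a'‖ / ‖a t‖ + ‖b'‖ / ‖b t‖ := by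
  set u := NormedSpace.normalize (a t)
  set v := NormedSpace.normalize (b t)
  set u' := ‖a t‖⁻¹ • (a' - ⟪u, a'⟫ • u)
  set v' := ‖b t‖⁻¹ • (b' - ⟪v, b'⟫ • v)
  have hu : ‖u‖ = 1 := NormedSpace.norm_normalize ha0
  have hv : ‖v‖ = 1 := NormedSpace.norm_normalize hb0
  have hu' : ‖u'‖ ≤ ‖a'‖ / ‖a t‖ := by
    rw [norm_smul, norm_inv, norm_norm, inv_mul_eq_div]
    gcongr
    exact norm_sub_inner_smul_le hu a'
  have hv' : ‖v'‖ ≤ ‖b'‖ / ‖b t‖ := by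
    rw [norm_smul, norm_inv, norm_norm, inv_mul_eq_div]
    gcongr
    exact norm_sub_inner_smul_le hv b'
  refine ⟨⟪u, v'⟫ + ⟪u', v⟫, ?_, ?_⟩
  · simp only [← real_inner_normalize_normalize]
    exact (ha.normalize ha0).inner ℝ (hb.normalize hb0)
  · calc |⟪u, v'⟫ + ⟪u', v⟫| ≤ ‖u‖ * ‖v'‖ + ‖u'‖ * ‖v‖ :=
          (abs_add_le _ _).trans (add_le_add (abs_real_inner_le_norm _ _)
            (abs_real_inner_le_norm _ _))
      _ ≤ ‖a'‖ / ‖a t‖ + ‖b'‖ / ‖b t‖ := by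
          rw [hu, hv, one_mul, mul_one, add_comm]
          exact add_le_add hu' hv'

theorem abs_deriv_sqrt_le {f : ℝ → ℝ} {f' t c : ℝ} (hf : HasDerivAt f f' t) (hc : 0 < c)
    (hcf : c ≤ √(f t)) : |deriv (fun s => √(f s)) t| ≤ |f'| / (2 * c) := by
  have hsqrt : 0 < √(f t) := hc.trans_le hcf
  rw [(hf.sqrt (Real.sqrt_pos.mp hsqrt).ne').deriv, abs_div, abs_of_pos (mul_pos two_pos hsqrt)]
  gcongr

theorem stmt_15_general (dmin C c0 : ℝ) (hdmin : 0 < dmin) (hc0 : 0 < c0)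
    (a b : ℝ → EuclideanSpace ℝ (Fin 2))
    (ha : ContDiff ℝ 1 a) (hb : ContDiff ℝ 1 b)
    (hna : ∀ α : ℝ, dmin ≤ ‖a α‖) (hnb : ∀ α : ℝ, dmin ≤ ‖b α‖)
    (hda : ∀ α : ℝ, ‖deriv a α‖ ≤ C) (hdb : ∀ α : ℝ, ‖deriv b α‖ ≤ C)
    (hc : ∀ α : ℝ, c0 ≤ Real.sqrt (((inner ℝ (a α) (b α) : ℝ) / (‖a α‖ * ‖b α‖) + 1) / 2)) :
    ContDiff ℝ 1
      (fun α : ℝ => Real.sqrt (((inner ℝ (a α) (b α) : ℝ) / (‖a α‖ * ‖b α‖) + 1) / 2)) ∧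
    ∀ α : ℝ,
      |deriv (fun α : ℝ =>
          Real.sqrt (((inner ℝ (a α) (b α) : ℝ) / (‖a α‖ * ‖b α‖) + 1) / 2)) α|
        ≤ C / (dmin * c0) := by
  have hna0 (α : ℝ) : 0 < ‖a α‖ := hdmin.trans_le (hna α)
  have hnb0 (α : ℝ) : 0 < ‖b α‖ := hdmin.trans_le (hnb α)
  have ha0 (α : ℝ) : a α ≠ 0 := norm_pos_iff.mp (hna0 α)
  have hb0 (α : ℝ) : b α ≠ 0 := norm_pos_iff.mp (hnb0 α)
  refine ⟨contDiff_iff_contDiffAt.2 fun α => ?_, fun α => ?_⟩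
  · have hx : ContDiff ℝ 1 fun s => ⟪a s, b s⟫ / (‖a s‖ * ‖b s‖) :=
      (ha.inner ℝ hb).div ((ha.norm ℝ ha0).mul (hb.norm ℝ hb0))
        fun s => (mul_pos (hna0 s) (hnb0 s)).ne'
    exact ((hx.add contDiff_const).div_const 2).contDiffAt.sqrt
      (Real.sqrt_pos.mp (hc0.trans_le (hc α))).ne'
  · obtain ⟨x', hx', hx'_le⟩ := HasDerivAt.exists_inner_div_norm_mul_norm
      (ha.differentiable one_ne_zero α).hasDerivAt (hb.differentiable one_ne_zero α).hasDerivAt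
      (ha0 α) (hb0 α)
    have hC : 0 ≤ C := (norm_nonneg _).trans (hda α)
    calc _ ≤ |x' / 2| / (2 * c0) := abs_deriv_sqrt_le ((hx'.add_const 1).div_const 2) hc0 (hc α)
      _ ≤ (C / dmin + C / dmin) / 2 / (2 * c0) := by
          rw [abs_div, abs_two]
          gcongr
          refine hx'_le.trans (add_le_add ?_ ?_) <;> gcongr
          exacts [hda α, hna α, hdb α, hnb α]
      _ = C / (dmin * c0) / 2 := by field_simp; ring
      _ ≤ C / (dmin * c0) := half_le_self (by positivity)

theorem stmt_15 (dmin C c0 : ℝ) (hdmin : 0 < dmin) (hC : 0 ≤ C) (hc0 : 0 < c0)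
    (a b : ℝ → EuclideanSpace ℝ (Fin 2))
    (ha : ContDiff ℝ 1 a) (hb : ContDiff ℝ 1 b)
    (hna : ∀ α : ℝ, dmin ≤ ‖a α‖) (hnb : ∀ α : ℝ, dmin ≤ ‖b α‖)
    (hda : ∀ α : ℝ, ‖deriv a α‖ ≤ C) (hdb : ∀ α : ℝ, ‖deriv b α‖ ≤ C)
    (hc : ∀ α : ℝ, c0 ≤ Real.sqrt (((inner ℝ (a α) (b α) : ℝ) / (‖a α‖ * ‖b α‖) + 1) / 2)) :
    ContDiff ℝ 1
      (fun α : ℝ => Real.sqrt (((inner ℝ (a α) (b α) : ℝ) / (‖a α‖ * ‖b α‖) + 1) / 2)) ∧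
    ∀ α : ℝ,
      |deriv (fun α : ℝ =>
          Real.sqrt (((inner ℝ (a α) (b α) : ℝ) / (‖a α‖ * ‖b α‖) + 1) / 2)) α|
        ≤ C / (dmin * c0) :=
  stmt_15_general dmin C c0 hdmin hc0 a b ha hb hna hnb hda hdb hc
end
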